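/- Under unconfoundedness and positivity, the inverse-propensity-weighted estimand recovers the ATE: E[ t·y / e(X) − (1−t)·y / (1−e(X)) ] = E[y(1) − y(0)], where e(X) = P(t = 1 | X). -/

import Mathlib

attribute [local instance] Classical.propDecidable

/-- Probability of an event under a pmf `p` on a finite space. -/
noncomputable def prob {Ω : Type} [Fintype Ω] (p : Ω → ℝ) (E : Set Ω) : ℝ :=
  ∑ ω, if ω ∈ E then p ω else 0

/-- Conditional probability `P(A | B)` under `p`. -/
noncomputable def condProb {Ω : Type} [Fintype Ω] (p : Ω → ℝ) (A B : Set Ω) : ℝ :=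
  prob p (A ∩ B) / prob p B

/-!
Fix a stratum `X = x` and a treatment arm `A`. Unconfoundedness says that the joint law of the
potential outcomes `Z = (y(0), y(1))` factorizes against `A` on that stratum, so summing over the
(finitely many) values of `Z` gives `E[g(Z); A, X = x] = P(A | X = x) · E[g(Z); X = x]`.
Dividing by the propensity `P(A | X = x)` and summing over `x` recovers `E[g(Z)]`; taking
`g(Z) = y(1)` with `A = {t = 1}` and `g(Z) = y(0)` with `A = {t = 0}` gives the two terms of the
estimand.
-/

open Finset

section

variable {Ω : Type} [Fintype Ω] (p : Ω → ℝ)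

/-- The restricted expectation `E[f; S] = E[f · 1_S]`. -/
noncomputable def expOn (S : Set Ω) (f : Ω → ℝ) : ℝ :=
  ∑ ω, if ω ∈ S then p ω * f ω else 0

theorem sum_expOn_fiber {𝒳 : Type} [Fintype 𝒳] (X : Ω → 𝒳) (f : Ω → ℝ) :
    ∑ x, expOn p {ω | X ω = x} f = ∑ ω, p ω * f ω := by
  rw [← Finset.sum_fiberwise univ X]
  refine sum_congr rfl fun x _ => ?_
  rw [expOn, sum_filter]
  rfl

theorem expOn_comp_eq_sum_image {β : Type} (S : Set Ω) (Z : Ω → β) (g : β → ℝ) :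
    expOn p S (g ∘ Z) = ∑ z ∈ univ.image Z, g z * prob p ({ω | Z ω = z} ∩ S) := by
  rw [expOn, ← sum_fiberwise_of_maps_to (g := Z) (t := univ.image Z) (by simp)]
  refine sum_congr rfl fun z _ => ?_
  rw [prob, mul_sum, sum_filter]
  refine sum_congr rfl fun ω _ => ?_
  by_cases hz : Z ω = z <;> by_cases hS : ω ∈ S <;> simp [hz, hS, mul_comm]

theorem expOn_inter_mul_prob {β : Type} {A B : Set Ω} {Z : Ω → β}
    (hind : ∀ z, prob p ({ω | Z ω = z} ∩ (A ∩ B)) * prob p B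
      = prob p ({ω | Z ω = z} ∩ B) * prob p (A ∩ B)) (g : β → ℝ) :
    expOn p (A ∩ B) (g ∘ Z) * prob p B = prob p (A ∩ B) * expOn p B (g ∘ Z) := by
  rw [expOn_comp_eq_sum_image, expOn_comp_eq_sum_image, sum_mul, mul_sum]
  refine sum_congr rfl fun z _ => ?_
  rw [mul_assoc, hind]
  ring

/-- Since `condProb p A B` is `0` whenever `prob p B = 0` (division by zero), a nonzero
conditional probability certifies a non-null conditioning event. -/
theorem prob_ne_zero_of_condProb_ne_zero {A B : Set Ω} (h : condProb p A B ≠ 0) :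
    prob p B ≠ 0 := by
  rintro hB
  simp [condProb, hB] at h

theorem prob_inter_add_prob_compl_inter (A B : Set Ω) :
    prob p (A ∩ B) + prob p (Aᶜ ∩ B) = prob p B := by
  rw [prob, prob, prob, ← sum_add_distrib]
  refine sum_congr rfl fun ω _ => ?_
  by_cases hA : ω ∈ A <;> by_cases hB : ω ∈ B <;> simp [hA, hB]

theorem condProb_compl {A B : Set Ω} (hB : prob p B ≠ 0) :
    condProb p Aᶜ B = 1 - condProb p A B := by
  rw [condProb, condProb, ← prob_inter_add_prob_compl_inter p A B]
  rw [← prob_inter_add_prob_compl_inter p A B] at hB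
  field_simp
  ring

theorem sum_mul_ite_div_condProb {𝒳 β : Type} [Fintype 𝒳] {A : Set Ω} (X : Ω → 𝒳)
    {Z : Ω → β} {w : 𝒳 → ℝ} (hw : ∀ x, w x = condProb p A {ω | X ω = x})
    (hw0 : ∀ x, w x ≠ 0)
    (hind : ∀ x z, prob p ({ω | Z ω = z} ∩ (A ∩ {ω | X ω = x})) * prob p {ω | X ω = x}
      = prob p ({ω | Z ω = z} ∩ {ω | X ω = x}) * prob p (A ∩ {ω | X ω = x}))
    (g : β → ℝ) :
    ∑ ω, p ω * (if ω ∈ A then g (Z ω) / w (X ω) else 0) = ∑ ω, p ω * g (Z ω) := by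
  rw [← sum_expOn_fiber p X, ← sum_expOn_fiber p X]
  refine sum_congr rfl fun x _ => ?_
  have hB : prob p {ω | X ω = x} ≠ 0 := prob_ne_zero_of_condProb_ne_zero p (hw x ▸ hw0 x)
  have hfiber : expOn p {ω | X ω = x} (fun ω => if ω ∈ A then g (Z ω) / w (X ω) else 0)
      = expOn p (A ∩ {ω | X ω = x}) (g ∘ Z) / w x := by
    rw [expOn, expOn, sum_div]
    refine sum_congr rfl fun ω _ => ?_
    by_cases hA : ω ∈ A <;> by_cases hX : X ω = x <;> simp [hA, hX, mul_div_assoc]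
  rw [hfiber, div_eq_iff (hw0 x), hw x, condProb, mul_div_assoc', eq_div_iff hB,
    expOn_inter_mul_prob p (hind x), mul_comm]
  rfl

end

theorem stmt_18_general {Ω 𝒳 : Type} [Fintype Ω] [Fintype 𝒳]
    (p : Ω → ℝ)
    (t : Ω → Bool) (y0 y1 : Ω → ℝ) (X : Ω → 𝒳)
    -- observed outcome
    (y : Ω → ℝ) (hy : ∀ ω, y ω = if t ω then y1 ω else y0 ω)
    -- the propensity score e(x) = P(t = 1 | X = x)
    (e : 𝒳 → ℝ) (he : ∀ x, e x = condProb p {ω | t ω = true} {ω | X ω = x})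
    -- unconfoundedness: (y(0), y(1)) ⫫ t | X
    (hunconf : ∀ (a b : ℝ) (tv : Bool) (x : 𝒳),
      prob p {ω | y0 ω = a ∧ y1 ω = b ∧ t ω = tv ∧ X ω = x} * prob p {ω | X ω = x}
        = prob p {ω | y0 ω = a ∧ y1 ω = b ∧ X ω = x} *
            prob p {ω | t ω = tv ∧ X ω = x})
    -- positivity: 0 < e(x) < 1 for all x
    (hposit : ∀ x : 𝒳, 0 < e x ∧ e x < 1) :
    (∑ ω, p ω * ((if t ω then y ω / e (X ω) else 0) -
        (if t ω then 0 else y ω / (1 - e (X ω)))))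
      = ∑ ω, p ω * (y1 ω - y0 ω) := by
  set T : Set Ω := {ω | t ω = true}
  have hTc : {ω | t ω = false} = Tᶜ := by ext; simp [T]
  have hind : ∀ (tv : Bool) x (z : ℝ × ℝ),
      prob p ({ω | (y0 ω, y1 ω) = z} ∩ ({ω | t ω = tv} ∩ {ω | X ω = x})) * prob p {ω | X ω = x}
        = prob p ({ω | (y0 ω, y1 ω) = z} ∩ {ω | X ω = x}) *
            prob p ({ω | t ω = tv} ∩ {ω | X ω = x}) := by
    rintro tv x ⟨a, b⟩
    convert hunconf a b tv x using 3 <;> ext <;> simp [and_assoc]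
  have hX : ∀ x, prob p {ω | X ω = x} ≠ 0 :=
    fun x => prob_ne_zero_of_condProb_ne_zero p (he x ▸ (hposit x).1.ne')
  have treated :=
    sum_mul_ite_div_condProb p X he (fun x => (hposit x).1.ne') (hind true) Prod.snd
  have control := sum_mul_ite_div_condProb p X (A := Tᶜ) (w := fun x => 1 - e x)
    (fun x => by rw [condProb_compl p (hX x), he]) (fun x => (sub_pos.2 (hposit x).2).ne')
    (hTc ▸ hind false) Prod.fst
  simp only [mul_sub, sum_sub_distrib]
  rw [← treated, ← control]
  congr 1 <;> refine sum_congr rfl fun ω _ => ?_ <;> cases h : t ω <;> simp [T, h, hy]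

/-- under unconfoundedness and positivity, the inverse-propensity-weighted
estimand recovers the ATE:
`E[ t·y / e(X) − (1−t)·y / (1−e(X)) ] = E[y(1) − y(0)]`, with `e(X) = P(t = 1 | X)`. -/
theorem stmt_18 {Ω 𝒳 : Type} [Fintype Ω] [Fintype 𝒳]
    (p : Ω → ℝ) (hnonneg : ∀ ω, 0 ≤ p ω) (hsum : ∑ ω, p ω = 1)
    (t : Ω → Bool) (y0 y1 : Ω → ℝ) (X : Ω → 𝒳)
    -- observed outcome
    (y : Ω → ℝ) (hy : ∀ ω, y ω = if t ω then y1 ω else y0 ω)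
    -- the propensity score e(x) = P(t = 1 | X = x)
    (e : 𝒳 → ℝ) (he : ∀ x, e x = condProb p {ω | t ω = true} {ω | X ω = x})
    -- unconfoundedness: (y(0), y(1)) ⫫ t | X
    (hunconf : ∀ (a b : ℝ) (tv : Bool) (x : 𝒳),
      prob p {ω | y0 ω = a ∧ y1 ω = b ∧ t ω = tv ∧ X ω = x} * prob p {ω | X ω = x}
        = prob p {ω | y0 ω = a ∧ y1 ω = b ∧ X ω = x} *
            prob p {ω | t ω = tv ∧ X ω = x})
    -- positivity: 0 < e(x) < 1 for all x
    (hposit : ∀ x : 𝒳, 0 < e x ∧ e x < 1) :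
    (∑ ω, p ω * ((if t ω then y ω / e (X ω) else 0) -
        (if t ω then 0 else y ω / (1 - e (X ω)))))
      = ∑ ω, p ω * (y1 ω - y0 ω) :=
  stmt_18_general p t y0 y1 X y hy e he hunconf hposit
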